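/- Suppose the kernel K₁ : ℝ → ℝ is symmetric around zero, bounded, K₁(v) = 0 for |v| > C₁, ∫K₁(z)dz = 1, and K₁ is Lipschitz continuous. Then there is a constant C depending only on K₁ such that for all integers 1 ≤ T₁ ≤ T, all h > 0, and all u ∈ [C₁h, 1], | (Th)^{-1} Σ_{t=1}^{T₁} K₁((u − t/T)/h) − 1/2 | ≤ C·( 1/(T₁h²) + |u − T₁/T|/h ). -/

import Mathlib

open MeasureTheory Filter Topology

set_option maxHeartbeats 1000000 in
theorem kernel_sum_half_bound (K : ℝ → ℝ) (C₁ : ℝ)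
    (hsymm : ∀ v, K (-v) = K v)
    (hbdd : ∃ B, ∀ v, |K v| ≤ B)
    (hsupp : ∀ v, C₁ < |v| → K v = 0)
    (hint : (∫ z, K z) = 1)
    (hlip : ∃ L, ∀ v w, |K v - K w| ≤ L * |v - w|) :
    ∃ C : ℝ, ∀ (T T₁ : ℕ), 1 ≤ T₁ → T₁ ≤ T → ∀ h : ℝ, 0 < h →
      ∀ u : ℝ, C₁ * h ≤ u → u ≤ 1 →
      |(1 / ((T : ℝ) * h)) * ∑ t ∈ Finset.Icc 1 T₁, K ((u - (t : ℝ) / (T : ℝ)) / h)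
          - 1 / 2|
        ≤ C * (1 / ((T₁ : ℝ) * h ^ 2) + |u - (T₁ : ℝ) / (T : ℝ)| / h) := by
  classical
  obtain ⟨B, hB⟩ := hbdd
  obtain ⟨L0, hL0⟩ := hlip
  set L : ℝ := max L0 0 with hLdef
  have hLnn : 0 ≤ L := le_max_right _ _
  have hL : ∀ v w, |K v - K w| ≤ L * |v - w| := fun v w =>
    (hL0 v w).trans (mul_le_mul_of_nonneg_right (le_max_left _ _) (abs_nonneg _))
  have hBnn : 0 ≤ B := (abs_nonneg _).trans (hB 0)
  have hKcont : Continuous K := by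
    have : LipschitzWith L.toNNReal K := LipschitzWith.of_dist_le_mul (fun x y => by
      rw [Real.dist_eq, Real.dist_eq, Real.coe_toNNReal _ hLnn]; exact hL x y)
    exact this.continuous
  have hKint : ∀ a b : ℝ, IntervalIntegrable K volume a b := fun a b =>
    hKcont.intervalIntegrable a b
  -- C₁ must be positive
  have hC₁pos : 0 < C₁ := by
    by_contra hc
    push_neg at hc
    have hz : ∀ᵐ z : ℝ, K z = 0 := by
      rw [MeasureTheory.ae_iff]
      refine measure_mono_null (t := {(0:ℝ)}) (fun z hz => ?_) Real.volume_singleton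
      simp only [Set.mem_setOf_eq, Set.mem_singleton_iff] at *
      by_contra h0
      exact hz (hsupp z (lt_of_le_of_lt hc (abs_pos.mpr h0)))
    rw [integral_eq_zero_of_ae hz] at hint
    norm_num at hint
  -- K vanishes on |v| ≥ C₁
  have hKC₁ : K C₁ = 0 := by
    have key : ∀ ε : ℝ, 0 < ε → |K C₁| ≤ L * ε := by
      intro ε hε
      have h1 : K (C₁ + ε) = 0 := hsupp _ (by rw [abs_of_pos (by linarith)]; linarith)
      calc |K C₁| = |K C₁ - K (C₁ + ε)| := by rw [h1, sub_zero]
        _ ≤ L * |C₁ - (C₁ + ε)| := hL _ _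
        _ = L * ε := by rw [show C₁ - (C₁ + ε) = -ε by ring, abs_neg, abs_of_pos hε]
    by_contra h0
    have hpos : 0 < |K C₁| := abs_pos.mpr h0
    have := key (|K C₁| / (2 * (L + 1))) (by positivity)
    rw [mul_div_assoc', le_div_iff₀ (by positivity)] at this
    nlinarith [mul_nonneg hLnn hpos.le]
  have hsupp' : ∀ v, C₁ ≤ |v| → K v = 0 := by
    intro v hv
    rcases lt_or_eq_of_le hv with h' | h'
    · exact hsupp v h'
    · rcases abs_eq (le_of_lt hC₁pos) |>.mp h'.symm with h'' | h''
      · rw [h'']; exact hKC₁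
      · rw [h'', hsymm]; exact hKC₁
  -- half-integral identity
  have hhalf : (∫ z in (0:ℝ)..C₁, K z) = 1/2 := by
    have hsub : ∀ x ∉ Set.Icc (-C₁) C₁, K x = 0 := by
      intro x hx
      simp only [Set.mem_Icc, not_and_or, not_le] at hx
      refine hsupp x ?_
      rcases hx with h' | h'
      · calc C₁ < -x := by linarith
          _ ≤ |x| := neg_le_abs x
      · exact lt_of_lt_of_le h' (le_abs_self x)
    have h1 : (∫ z in Set.Icc (-C₁) C₁, K z) = 1 := by
      rw [setIntegral_eq_integral_of_forall_compl_eq_zero hsub]; exact hint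
    have h2 : (∫ z in (-C₁)..C₁, K z) = 1 := by
      rw [intervalIntegral.integral_of_le (by linarith), ← integral_Icc_eq_integral_Ioc]
      exact h1
    have h3 : (∫ z in (-C₁)..(0:ℝ), K z) = ∫ z in (0:ℝ)..C₁, K z := by
      have hcn := intervalIntegral.integral_comp_neg (a := (0:ℝ)) (b := C₁) K
      simp only [hsymm, neg_zero] at hcn
      rw [← hcn]
    have h4 := intervalIntegral.integral_add_adjacent_intervals
      (hKint (-C₁) 0) (hKint 0 C₁) (μ := volume)
    rw [h3] at h4
    linarith [h4.trans h2]
  refine ⟨5 * L + B, ?_⟩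
  intro T T₁ hT₁ hT₁T h hh u hu1 hu2
  have hT0 : 0 < T := by omega
  have hTpos : 0 < (T : ℝ) := by exact_mod_cast hT0
  have hT₁pos : 0 < (T₁ : ℝ) := by exact_mod_cast hT₁
  have hT₁T' : (T₁ : ℝ) ≤ (T : ℝ) := by exact_mod_cast hT₁T
  have hTge1 : (1:ℝ) ≤ (T:ℝ) := by exact_mod_cast hT0
  have hupos : 0 < u := lt_of_lt_of_le (mul_pos hC₁pos hh) hu1
  have hC₁h : C₁ * h ≤ 1 := le_trans hu1 hu2
  set f : ℝ → ℝ := fun s => K ((u - s) / h) with hfdef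
  have hfcont : Continuous f := hKcont.comp (by fun_prop)
  have hfint : ∀ a b : ℝ, IntervalIntegrable f volume a b := fun a b =>
    hfcont.intervalIntegrable a b
  have hflip : ∀ x y : ℝ, |f x - f y| ≤ (L / h) * |x - y| := by
    intro x y
    calc |f x - f y| ≤ L * |(u - x)/h - (u - y)/h| := hL _ _
      _ = (L / h) * |x - y| := by
          rw [show (u - x)/h - (u - y)/h = (y - x)/h by ring, abs_div, abs_of_pos hh,
            abs_sub_comm y x]
          ring
  -- reindex the sum
  have hsum1 : ∑ t ∈ Finset.Icc 1 T₁, K ((u - (t:ℝ)/(T:ℝ))/h)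
      = ∑ i ∈ Finset.range T₁, f (((i:ℝ)+1)/(T:ℝ)) := by
    rw [← Finset.Ico_add_one_right_eq_Icc, Finset.sum_Ico_eq_sum_range]
    have hT₁1 : T₁ + 1 - 1 = T₁ := by omega
    rw [hT₁1]
    refine Finset.sum_congr rfl (fun i _ => ?_)
    simp only [hfdef]
    congr 1
    push_cast
    ring
  -- adjacent interval decomposition
  have hadj := intervalIntegral.sum_integral_adjacent_intervals (μ := volume)
    (a := fun i : ℕ => (i:ℝ)/(T:ℝ)) (f := f) (n := T₁) (fun k _ => hfint _ _)
  simp only [Nat.cast_zero, zero_div, Nat.cast_add, Nat.cast_one] at hadj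
  -- change of variables
  have hI1 : (∫ s in (0:ℝ)..((T₁:ℝ)/(T:ℝ)), f s)
      = h * ∫ z in ((u - (T₁:ℝ)/(T:ℝ))/h)..(u/h), K z := by
    have e1 : (∫ s in (0:ℝ)..((T₁:ℝ)/(T:ℝ)), (fun x => K (x/h)) (u - s))
        = ∫ x in (u - (T₁:ℝ)/(T:ℝ))..(u - 0), K (x/h) :=
      intervalIntegral.integral_comp_sub_left (fun x => K (x/h)) u
    have e2 : (∫ x in (u - (T₁:ℝ)/(T:ℝ))..u, K (x/h))
        = h * ∫ z in ((u - (T₁:ℝ)/(T:ℝ))/h)..(u/h), K z := by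
      rw [intervalIntegral.integral_comp_div K (ne_of_gt hh), smul_eq_mul]
    simp only [sub_zero] at e1
    rw [← e2, ← e1]
  set a : ℝ := (u - (T₁:ℝ)/(T:ℝ))/h with hadef
  set I : ℝ := ∫ z in a..(u/h), K z with hIdef
  -- Claim B : |I - 1/2| ≤ B * |u - T₁/T| / h
  have hbC : C₁ ≤ u/h := (le_div_iff₀ hh).mpr (by linarith)
  have hIzero : (∫ z in C₁..(u/h), K z) = 0 := by
    have heq : Set.EqOn K (fun _ => (0:ℝ)) (Set.uIcc C₁ (u/h)) := by
      intro x hx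
      rw [Set.uIcc_of_le hbC] at hx
      exact hsupp' x (le_trans hx.1 (le_abs_self x))
    rw [intervalIntegral.integral_congr heq]
    simp
  have hsplitA := intervalIntegral.integral_add_adjacent_intervals
    (hKint a 0) (hKint 0 C₁) (μ := volume)
  have hsplitB := intervalIntegral.integral_add_adjacent_intervals
    (hKint a C₁) (hKint C₁ (u/h)) (μ := volume)
  have hIval : I = (∫ z in a..(0:ℝ), K z) + 1/2 := by
    rw [hIdef, ← hsplitB, hIzero, add_zero, ← hsplitA, hhalf]
  have hIbound : |I - 1/2| ≤ B * (|u - (T₁:ℝ)/(T:ℝ)| / h) := by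
    rw [hIval, add_sub_cancel_right]
    have hb := intervalIntegral.norm_integral_le_of_norm_le_const
      (a := a) (b := (0:ℝ)) (C := B) (f := K) (fun x _ => hB x)
    rw [Real.norm_eq_abs] at hb
    calc |∫ z in a..(0:ℝ), K z| ≤ B * |0 - a| := hb
      _ = B * (|u - (T₁:ℝ)/(T:ℝ)| / h) := by
          rw [zero_sub, abs_neg, hadef, abs_div, abs_of_pos hh]
  -- per-interval errors
  set e : ℕ → ℝ := fun i =>
    (1/(T:ℝ)) * f (((i:ℝ)+1)/(T:ℝ)) - ∫ s in ((i:ℝ)/(T:ℝ))..(((i:ℝ)+1)/(T:ℝ)), f s with hedef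
  have hstep : ∀ i : ℕ, ((i:ℝ))/(T:ℝ) ≤ ((i:ℝ)+1)/(T:ℝ) := fun i => by
    rw [div_le_div_iff₀ hTpos hTpos]
    nlinarith [hTpos]
  have hgap : ∀ i : ℕ, ((i:ℝ)+1)/(T:ℝ) - ((i:ℝ))/(T:ℝ) = 1/(T:ℝ) := fun i => by ring
  have hebound : ∀ i : ℕ, |e i| ≤ L / ((T:ℝ) * h) * (1/(T:ℝ)) := by
    intro i
    have hconst : (∫ s in ((i:ℝ)/(T:ℝ))..(((i:ℝ)+1)/(T:ℝ)),
        f (((i:ℝ)+1)/(T:ℝ))) = (1/(T:ℝ)) * f (((i:ℝ)+1)/(T:ℝ)) := by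
      rw [intervalIntegral.integral_const, smul_eq_mul, hgap i]
    have hrepr : e i = ∫ s in ((i:ℝ)/(T:ℝ))..(((i:ℝ)+1)/(T:ℝ)),
        (f (((i:ℝ)+1)/(T:ℝ)) - f s) := by
      rw [intervalIntegral.integral_sub intervalIntegrable_const (hfint _ _), hconst, hedef]
    have hb := intervalIntegral.norm_integral_le_of_norm_le_const
      (a := ((i:ℝ)/(T:ℝ))) (b := (((i:ℝ)+1)/(T:ℝ))) (C := L/((T:ℝ)*h))
      (f := fun s => f (((i:ℝ)+1)/(T:ℝ)) - f s) ?_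
    · rw [Real.norm_eq_abs] at hb
      rw [hrepr]
      calc |∫ s in ((i:ℝ)/(T:ℝ))..(((i:ℝ)+1)/(T:ℝ)), (f (((i:ℝ)+1)/(T:ℝ)) - f s)|
          ≤ L/((T:ℝ)*h) * |((i:ℝ)+1)/(T:ℝ) - ((i:ℝ))/(T:ℝ)| := hb
        _ = L / ((T:ℝ) * h) * (1/(T:ℝ)) := by
            rw [hgap i, abs_of_pos (one_div_pos.mpr hTpos)]
    · intro x hx
      rw [Set.uIoc_of_le (hstep i)] at hx
      rw [Real.norm_eq_abs]
      calc |f (((i:ℝ)+1)/(T:ℝ)) - f x| ≤ (L/h) * |((i:ℝ)+1)/(T:ℝ) - x| := hflip _ _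
        _ ≤ (L/h) * (1/(T:ℝ)) := by
            apply mul_le_mul_of_nonneg_left _ (div_nonneg hLnn hh.le)
            rw [abs_of_nonneg (by linarith [hx.2])]
            have := hgap i
            linarith [hx.1]
        _ = L/((T:ℝ)*h) := by ring
  -- vanishing of errors away from the support window
  set P : ℕ → Prop := fun i =>
    ((i:ℝ)/(T:ℝ) ≤ u + C₁*h ∧ u - C₁*h ≤ ((i:ℝ)+1)/(T:ℝ)) with hPdef
  have hevanish : ∀ i, ¬ P i → e i = 0 := by
    intro i hP
    simp only [hPdef] at hP
    push_neg at hP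
    have hzone : ∀ x ∈ Set.Icc ((i:ℝ)/(T:ℝ)) (((i:ℝ)+1)/(T:ℝ)), f x = 0 := by
      intro x hx
      rcases lt_or_ge (u + C₁*h) ((i:ℝ)/(T:ℝ)) with hcase | hcase
      · apply hsupp
        have h1 : u - x < -(C₁*h) := by linarith [hx.1]
        have h2 : (u - x)/h < -C₁ := by
          rw [div_lt_iff₀ hh]
          linarith
        calc C₁ < -((u - x)/h) := by linarith
          _ ≤ |(u - x)/h| := neg_le_abs _
      · have h2 : ((i:ℝ)+1)/(T:ℝ) < u - C₁*h := hP hcase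
        apply hsupp
        have h1 : C₁ * h < u - x := by linarith [hx.2]
        have h3 : C₁ < (u - x)/h := (lt_div_iff₀ hh).mpr (by linarith)
        exact lt_of_lt_of_le h3 (le_abs_self _)
    have hint0 : (∫ s in ((i:ℝ)/(T:ℝ))..(((i:ℝ)+1)/(T:ℝ)), f s) = 0 := by
      have heq : Set.EqOn f (fun _ => (0:ℝ)) (Set.uIcc ((i:ℝ)/(T:ℝ)) (((i:ℝ)+1)/(T:ℝ))) := by
        intro x hx
        rw [Set.uIcc_of_le (hstep i)] at hx
        exact hzone x hx
      rw [intervalIntegral.integral_congr heq]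
      simp
    have hft : f (((i:ℝ)+1)/(T:ℝ)) = 0 := hzone _ ⟨hstep i, le_refl _⟩
    simp [hedef, hint0, hft]
  -- counting
  set n : ℕ := ⌊(T:ℝ)*(u - C₁*h)⌋₊ with hndef
  set m : ℕ := ⌊(T:ℝ)*(u + C₁*h)⌋₊ with hmdef
  have hfilter_sub : (Finset.range T₁).filter P ⊆ Finset.Icc (n-1) m := by
    intro i hi
    rw [Finset.mem_filter] at hi
    obtain ⟨-, h1, h2⟩ := hi
    rw [Finset.mem_Icc]
    constructor
    · have hnle : (n:ℝ) ≤ (T:ℝ)*(u - C₁*h) :=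
        Nat.floor_le (mul_nonneg hTpos.le (by linarith))
      have hi1 : (T:ℝ)*(u - C₁*h) ≤ (i:ℝ)+1 := by
        have := (le_div_iff₀ hTpos).mp h2
        linarith
      have hni : n ≤ i + 1 := by exact_mod_cast le_trans hnle hi1
      omega
    · refine Nat.le_floor ?_
      have := (div_le_iff₀ hTpos).mp h1
      linarith
  have hcardR : (((Finset.range T₁).filter P).card : ℝ) ≤ 2*C₁*h*(T:ℝ) + 3 := by
    have hcard : ((Finset.range T₁).filter P).card ≤ m + 2 - n := by
      calc ((Finset.range T₁).filter P).card ≤ (Finset.Icc (n-1) m).card :=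
            Finset.card_le_card hfilter_sub
        _ = m + 1 - (n-1) := Nat.card_Icc _ _
        _ ≤ m + 2 - n := by omega
    have h1 : ((m + 2 - n : ℕ) : ℝ) ≤ 2*C₁*h*(T:ℝ) + 3 := by
      rcases le_or_gt n (m+2) with hc | hc
      · rw [Nat.cast_sub hc]
        push_cast
        have hCh : (0:ℝ) < C₁ * h := mul_pos hC₁pos hh
        have hm : (m:ℝ) ≤ (T:ℝ)*(u + C₁*h) :=
          Nat.floor_le (mul_nonneg hTpos.le (by linarith))
        have hn : (T:ℝ)*(u - C₁*h) < (n:ℝ) + 1 :=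
          Nat.lt_floor_add_one ((T:ℝ)*(u - C₁*h))
        have hexp : (T:ℝ)*(u + C₁*h) - (T:ℝ)*(u - C₁*h) = 2*C₁*h*(T:ℝ) := by ring
        linarith
      · rw [Nat.sub_eq_zero_of_le hc.le]
        have : (0:ℝ) ≤ 2*C₁*h*(T:ℝ) + 3 := by positivity
        simpa using this
    calc (((Finset.range T₁).filter P).card : ℝ) ≤ ((m + 2 - n : ℕ) : ℝ) := by
          exact_mod_cast hcard
      _ ≤ 2*C₁*h*(T:ℝ) + 3 := h1
  -- total Riemann-sum error
  have hsumE : ∑ i ∈ Finset.range T₁, |e i|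
      ≤ (2*C₁*h*(T:ℝ) + 3) * (L/((T:ℝ)*h) * (1/(T:ℝ))) := by
    have hfilt : ∑ i ∈ (Finset.range T₁).filter P, |e i| = ∑ i ∈ Finset.range T₁, |e i| :=
      Finset.sum_filter_of_ne (fun i _ hne => by
        by_contra hP
        exact hne (by rw [hevanish i hP, abs_zero]))
    rw [← hfilt]
    calc ∑ i ∈ (Finset.range T₁).filter P, |e i|
        ≤ ((Finset.range T₁).filter P).card • (L/((T:ℝ)*h) * (1/(T:ℝ))) :=
          Finset.sum_le_card_nsmul _ _ _ (fun i _ => hebound i)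
      _ = (((Finset.range T₁).filter P).card : ℝ) * (L/((T:ℝ)*h) * (1/(T:ℝ))) :=
          nsmul_eq_mul _ _
      _ ≤ (2*C₁*h*(T:ℝ) + 3) * (L/((T:ℝ)*h) * (1/(T:ℝ))) :=
          mul_le_mul_of_nonneg_right hcardR
            (mul_nonneg (div_nonneg hLnn (mul_nonneg hTpos.le hh.le)) (by positivity))
  -- S - I = (1/h) Σ e
  have hSI : (1 / ((T:ℝ) * h)) * ∑ t ∈ Finset.Icc 1 T₁, K ((u - (t:ℝ)/(T:ℝ))/h) - I
      = (1/h) * ∑ i ∈ Finset.range T₁, e i := by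
    have hEi : ∑ i ∈ Finset.range T₁, e i
        = (1/(T:ℝ)) * (∑ i ∈ Finset.range T₁, f (((i:ℝ)+1)/(T:ℝ)))
          - ∫ s in (0:ℝ)..((T₁:ℝ)/(T:ℝ)), f s := by
      simp only [hedef]
      rw [Finset.sum_sub_distrib, ← Finset.mul_sum, hadj]
    rw [hsum1, hEi, hI1]
    field_simp
  have habs_SI : |(1 / ((T:ℝ) * h)) * ∑ t ∈ Finset.Icc 1 T₁, K ((u - (t:ℝ)/(T:ℝ))/h) - I|
      ≤ (1/h) * ((2*C₁*h*(T:ℝ) + 3) * (L/((T:ℝ)*h) * (1/(T:ℝ)))) := by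
    rw [hSI, abs_mul, abs_of_pos (one_div_pos.mpr hh)]
    apply mul_le_mul_of_nonneg_left _ (one_div_pos.mpr hh).le
    exact le_trans (Finset.abs_sum_le_sum_abs _ _) hsumE
  -- numeric simplification of the Riemann error
  have hfinal1 : (1/h) * ((2*C₁*h*(T:ℝ) + 3) * (L/((T:ℝ)*h) * (1/(T:ℝ))))
      ≤ 5*L * (1/((T₁:ℝ)*h^2)) := by
    have hkey : (2*C₁*h*(T:ℝ) + 3) * (T₁:ℝ) ≤ 5 * (T:ℝ)^2 := by
      have e1 : C₁*h*((T:ℝ)*(T₁:ℝ)) ≤ 1*((T:ℝ)*(T₁:ℝ)) :=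
        mul_le_mul_of_nonneg_right hC₁h (mul_pos hTpos hT₁pos).le
      have e2 : (T:ℝ)*(T₁:ℝ) ≤ (T:ℝ)*(T:ℝ) := mul_le_mul_of_nonneg_left hT₁T' hTpos.le
      have e3 : (T₁:ℝ) ≤ (T:ℝ)*(T:ℝ) :=
        le_trans hT₁T' (le_mul_of_one_le_left hTpos.le hTge1)
      linarith
    have h2 : (1/h) * ((2*C₁*h*(T:ℝ) + 3) * (L/((T:ℝ)*h) * (1/(T:ℝ))))
        = L * ((2*C₁*h*(T:ℝ) + 3) / ((T:ℝ)^2 * h^2)) := by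
      field_simp
    rw [h2, show 5*L*(1/((T₁:ℝ)*h^2)) = L * (5 / ((T₁:ℝ)*h^2)) by ring]
    apply mul_le_mul_of_nonneg_left _ hLnn
    rw [div_le_div_iff₀ (mul_pos (pow_pos hTpos 2) (pow_pos hh 2))
      (mul_pos hT₁pos (pow_pos hh 2))]
    linarith [mul_le_mul_of_nonneg_right hkey (sq_nonneg h)]
  -- combine
  have htri : |(1 / ((T:ℝ) * h)) * ∑ t ∈ Finset.Icc 1 T₁, K ((u - (t:ℝ)/(T:ℝ))/h) - 1/2|
      ≤ |(1 / ((T:ℝ) * h)) * ∑ t ∈ Finset.Icc 1 T₁, K ((u - (t:ℝ)/(T:ℝ))/h) - I|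
        + |I - 1/2| := abs_sub_le _ _ _
  have hx1 : (0:ℝ) ≤ 1/((T₁:ℝ)*h^2) := by positivity
  have hx2 : (0:ℝ) ≤ |u - (T₁:ℝ)/(T:ℝ)| / h := div_nonneg (abs_nonneg _) hh.le
  calc |(1 / ((T:ℝ) * h)) * ∑ t ∈ Finset.Icc 1 T₁, K ((u - (t:ℝ)/(T:ℝ))/h) - 1/2|
      ≤ 5*L * (1/((T₁:ℝ)*h^2)) + B * (|u - (T₁:ℝ)/(T:ℝ)| / h) := by
        linarith [le_trans habs_SI hfinal1, hIbound, htri]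
    _ ≤ (5 * L + B) * (1/((T₁:ℝ)*h^2) + |u - (T₁:ℝ)/(T:ℝ)| / h) := by
        have g1 : (0:ℝ) ≤ L * (|u - (T₁:ℝ)/(T:ℝ)| / h) := mul_nonneg hLnn hx2
        have g2 : (0:ℝ) ≤ B * (1/((T₁:ℝ)*h^2)) := mul_nonneg hBnn hx1
        nlinarith [g1, g2]
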